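/- arXiv:2304.09762 — 2 statements merged into one kernel-verified Lean document; each statement's English description precedes it below -/
import Mathlib

section
/- Let d ≥ 1 and let a, ξ be vectors in the Euclidean space ℝ^d with a + ξ ≠ 0. Then the inner product of a with the unit vector in the direction of a + ξ satisfies ⟨a, (a + ξ)/‖a + ξ‖⟩ ≥ ‖a‖/3 − (8/3)‖ξ‖. -/
open scoped RealInnerProductSpace

/-- Pointwise lower bound on the inner product of `a` with the unit vector in the
direction of `a + ξ` (Equation (8) of the paper). -/
theorem inner_normalized_lower_bound (d : ℕ) (hd : 1 ≤ d)
    (a ξ : EuclideanSpace ℝ (Fin d)) (h : a + ξ ≠ 0) :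
    ⟪a, ‖a + ξ‖⁻¹ • (a + ξ)⟫ ≥ ‖a‖ / 3 - (8 / 3) * ‖ξ‖ := by
  have hr : (0:ℝ) < ‖a + ξ‖ := norm_pos_iff.mpr h
  have h1 : ⟪a, a + ξ⟫ + ⟪ξ, a + ξ⟫ = ‖a + ξ‖ ^ 2 := by
    rw [← inner_add_left, real_inner_self_eq_norm_sq]
  have h2 : ⟪ξ, a + ξ⟫ ≤ ‖ξ‖ * ‖a + ξ‖ := real_inner_le_norm ξ (a + ξ)
  have h3 : ‖a‖ ≤ ‖a + ξ‖ + ‖ξ‖ := by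
    calc ‖a‖ = ‖(a + ξ) - ξ‖ := by rw [add_sub_cancel_right]
    _ ≤ ‖a + ξ‖ + ‖ξ‖ := norm_sub_le _ _
  rw [real_inner_smul_right]
  have key : ⟪a, a + ξ⟫ ≥ ‖a + ξ‖ * (‖a + ξ‖ - ‖ξ‖) := by nlinarith
  have h4 : ‖a + ξ‖⁻¹ * ⟪a, a + ξ⟫ ≥ ‖a + ξ‖ - ‖ξ‖ := by
    rw [inv_mul_eq_div, ge_iff_le, le_div_iff₀ hr]
    nlinarith [key]
  nlinarith [norm_nonneg ξ, norm_nonneg a]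
end

section
/- Let a be a fixed vector in the Euclidean space ℝ^d and let ξ be an integrable random vector in ℝ^d defined on a probability space, such that a + ξ ≠ 0 almost surely. Then E⟨a, (a + ξ)/‖a + ξ‖⟩ ≥ ‖a‖/3 − (8/3)·E‖ξ‖. -/
open MeasureTheory
open scoped RealInnerProductSpace

/-- Equation (7) of the paper: the expected inner product between the true gradient `a`
and the normalized noisy gradient `(a + ξ)/‖a + ξ‖` is bounded below by
`‖a‖/3 − (8/3)·E‖ξ‖`. -/
theorem expected_inner_normalized_lower_bound {Ω : Type*} [MeasurableSpace Ω]
    (P : Measure Ω) [IsProbabilityMeasure P] (d : ℕ) (hd : 1 ≤ d)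
    (a : EuclideanSpace ℝ (Fin d)) (ξ : Ω → EuclideanSpace ℝ (Fin d))
    (hint : Integrable ξ P) (hne : ∀ᵐ ω ∂P, a + ξ ω ≠ 0) :
    (∫ ω, ⟪a, ‖a + ξ ω‖⁻¹ • (a + ξ ω)⟫ ∂P) ≥ ‖a‖ / 3 - (8 / 3) * ∫ ω, ‖ξ ω‖ ∂P := by
  -- pointwise bound: integrand ≥ ‖a‖ - 2‖ξ ω‖
  have hfm : AEStronglyMeasurable (fun ω => a + ξ ω) P :=
    aestronglyMeasurable_const.add hint.aestronglyMeasurable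
  have hgm : AEStronglyMeasurable (fun ω => ‖a + ξ ω‖⁻¹ • (a + ξ ω)) P :=
    (hfm.norm.aemeasurable.inv.aestronglyMeasurable).smul hfm
  have him : AEStronglyMeasurable (fun ω => ⟪a, ‖a + ξ ω‖⁻¹ • (a + ξ ω)⟫) P :=
    (aestronglyMeasurable_const : AEStronglyMeasurable (fun _ : Ω => a) P).inner hgm
  have hbound : ∀ᵐ ω ∂P, ‖⟪a, ‖a + ξ ω‖⁻¹ • (a + ξ ω)⟫‖ ≤ ‖a‖ := by
    filter_upwards [hne] with ω hω
    have h1 : ‖‖a + ξ ω‖⁻¹ • (a + ξ ω)‖ = 1 := by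
      rw [norm_smul, norm_inv, norm_norm,
        inv_mul_cancel₀ (norm_ne_zero_iff.mpr hω)]
    calc ‖⟪a, ‖a + ξ ω‖⁻¹ • (a + ξ ω)⟫‖
        ≤ ‖a‖ * ‖‖a + ξ ω‖⁻¹ • (a + ξ ω)‖ := norm_inner_le_norm _ _
      _ = ‖a‖ := by rw [h1, mul_one]
  have hInt : Integrable (fun ω => ⟪a, ‖a + ξ ω‖⁻¹ • (a + ξ ω)⟫) P :=
    Integrable.mono' (integrable_const ‖a‖) him hbound
  have hlowInt : Integrable (fun ω => ‖a‖ - 2 * ‖ξ ω‖) P :=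
    (integrable_const ‖a‖).sub (hint.norm.const_mul 2)
  have hpt : ∀ᵐ ω ∂P, ‖a‖ - 2 * ‖ξ ω‖ ≤ ⟪a, ‖a + ξ ω‖⁻¹ • (a + ξ ω)⟫ := by
    filter_upwards [hne] with ω hω
    set x := a + ξ ω with hx
    have hxn : (0:ℝ) < ‖x‖ := norm_pos_iff.mpr hω
    have ha : a = x - ξ ω := by rw [hx]; abel
    have hinner : ⟪a, x⟫ = ‖x‖^2 - ⟪ξ ω, x⟫ := by
      rw [ha, inner_sub_left, real_inner_self_eq_norm_sq]
    have hsmul : ⟪a, ‖x‖⁻¹ • x⟫ = ‖x‖⁻¹ * ⟪a, x⟫ := real_inner_smul_right _ _ _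
    have hbd : ⟪ξ ω, x⟫ ≤ ‖ξ ω‖ * ‖x‖ := real_inner_le_norm _ _
    have key : ‖x‖ - ‖ξ ω‖ ≤ ⟪a, ‖x‖⁻¹ • x⟫ := by
      rw [hsmul, hinner]
      have : ‖x‖⁻¹ * (‖x‖^2 - ‖ξ ω‖ * ‖x‖) ≤ ‖x‖⁻¹ * (‖x‖^2 - ⟪ξ ω, x⟫) := by
        apply mul_le_mul_of_nonneg_left (by linarith) (by positivity)
      calc ‖x‖ - ‖ξ ω‖ = ‖x‖⁻¹ * (‖x‖^2 - ‖ξ ω‖ * ‖x‖) := by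
            field_simp
        _ ≤ _ := this
    have htri : ‖a‖ - ‖ξ ω‖ ≤ ‖x‖ := by
      have h := norm_sub_le x (ξ ω)
      rw [← ha] at h
      linarith
    linarith
  have h1 : ∫ ω, (‖a‖ - 2 * ‖ξ ω‖) ∂P ≤ ∫ ω, ⟪a, ‖a + ξ ω‖⁻¹ • (a + ξ ω)⟫ ∂P :=
    integral_mono_ae hlowInt hInt hpt
  have h2 : ∫ ω, (‖a‖ - 2 * ‖ξ ω‖) ∂P = ‖a‖ - 2 * ∫ ω, ‖ξ ω‖ ∂P := by
    rw [integral_sub (integrable_const ‖a‖) (hint.norm.const_mul 2),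
      integral_const, integral_const_mul]
    simp
  have hnonneg : 0 ≤ ∫ ω, ‖ξ ω‖ ∂P := integral_nonneg fun ω => norm_nonneg _
  have hna : (0:ℝ) ≤ ‖a‖ := norm_nonneg _
  rw [h2] at h1
  linarith
end
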